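/- (Closed-form solution of the Y-subproblem, eq. (13)–(14)) Let A be an n1 × n2 × n3 tensor with t-SVD A = U ∗ S ∗ V^H, and let β > 0. Define the f-diagonal tensor D by specifying its mode-3 DFT: D̄(i,i,k) = max(S̄(i,i,k) − n3/β, 0) for all i, k (and zero off the diagonal). Then Y* = U ∗ D ∗ V^H is a global minimizer of the function Y ↦ ‖Y‖_TNN + (β/2)·‖A − Y‖_F² over all n1 × n2 × n3 tensors. -/

import Mathlib

open Matrix
open scoped BigOperators ComplexConjugate

noncomputable section

/-- Circular convolution of two vectors of length `n`, indexed by `ZMod n`. -/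
def cconv {n : ℕ} [NeZero n] (a b : ZMod n → ℂ) : ZMod n → ℂ :=
  fun k => ∑ t : ZMod n, a t * b (k - t)

/-- Unnormalized discrete Fourier transform with ω = exp(-2πi/n):
`dft x k = ∑ t, x t * ω ^ (k*t)`. -/
def dft {n : ℕ} [NeZero n] (x : ZMod n → ℂ) : ZMod n → ℂ :=
  fun k => ∑ t : ZMod n, x t * Complex.exp (-(2 * Real.pi * Complex.I) / n) ^ (k * t).val

/-- A third-order complex tensor of size n1 × n2 × n3 (third index taken modulo n3). -/
abbrev Tensor (n1 n2 n3 : ℕ) := Fin n1 → Fin n2 → ZMod n3 → ℂ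

/-- The t-product: the (i,j)-th mode-3 tube of `A ∗ B` is `∑ k, A(i,k,·) ⋆ B(k,j,·)`. -/
def tProd {n1 n2 n4 n3 : ℕ} [NeZero n3] (A : Tensor n1 n2 n3) (B : Tensor n2 n4 n3) :
    Tensor n1 n4 n3 :=
  fun i j => ∑ k : Fin n2, cconv (A i k) (B k j)

/-- Mode-3 DFT: apply the DFT to every mode-3 tube. -/
def mdft {n1 n2 n3 : ℕ} [NeZero n3] (X : Tensor n1 n2 n3) : Tensor n1 n2 n3 :=
  fun i j => dft (X i j)

/-- The k-th frontal fslice of a tensor, as a matrix. -/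
def fslice {n1 n2 n3 : ℕ} (X : Tensor n1 n2 n3) (k : ZMod n3) : Matrix (Fin n1) (Fin n2) ℂ :=
  Matrix.of fun i j => X i j k

/-- Conjugate transpose of a tensor: conjugate-transpose each frontal fslice and reverse
the order of the transposed slices 2 through n3, i.e. `Xᴴ(i,j,t) = conj (X j i (-t))`. -/
def tconj {n1 n2 n3 : ℕ} (X : Tensor n1 n2 n3) : Tensor n2 n1 n3 :=
  fun i j t => (starRingEnd ℂ) (X j i (-t))

/-- The identity tensor: first frontal fslice is the identity matrix, others are zero. -/
def tId (n n3 : ℕ) : Tensor n n n3 :=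
  fun i j t => if t = 0 ∧ i = j then 1 else 0

/-- A tensor `Q` is orthogonal if `Q ∗ Qᴴ = Qᴴ ∗ Q = I`. -/
def TOrthogonal {n n3 : ℕ} [NeZero n3] (Q : Tensor n n n3) : Prop :=
  tProd Q (tconj Q) = tId n n3 ∧ tProd (tconj Q) Q = tId n n3

/-- A tensor is f-diagonal if each of its frontal slices is a diagonal matrix. -/
def FDiagonal {n1 n2 n3 : ℕ} (S : Tensor n1 n2 n3) : Prop :=
  ∀ (i : Fin n1) (j : Fin n2) (k : ZMod n3), (i : ℕ) ≠ (j : ℕ) → S i j k = 0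

/-- Frobenius norm of a tensor. -/
def frob {n1 n2 n3 : ℕ} [NeZero n3] (X : Tensor n1 n2 n3) : ℝ :=
  Real.sqrt (∑ i : Fin n1, ∑ j : Fin n2, ∑ t : ZMod n3, ‖X i j t‖ ^ 2)

/-- Frobenius norm of a matrix. -/
def frobM {m n : ℕ} (M : Matrix (Fin m) (Fin n) ℂ) : ℝ :=
  Real.sqrt (∑ i : Fin m, ∑ j : Fin n, ‖M i j‖ ^ 2)

/-- Nuclear norm of a matrix: the sum of its singular values,
i.e. of the square roots of the eigenvalues of `Mᴴ * M`. -/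
def nuclearNorm {m n : ℕ} (M : Matrix (Fin m) (Fin n) ℂ) : ℝ :=
  ∑ j : Fin n, Real.sqrt ((Matrix.isHermitian_conjTranspose_mul_self M).eigenvalues j)

/-- The tensor nuclear norm: sum of the nuclear norms of the Fourier-domain frontal slices. -/
def tnn {n1 n2 n3 : ℕ} [NeZero n3] (X : Tensor n1 n2 n3) : ℝ :=
  ∑ k : ZMod n3, nuclearNorm (fslice (mdft X) k)

/-!
Taking the mode-3 DFT turns the t-product into the product of frontal slices and the tensor
conjugate transpose into the slice-wise conjugate transpose, while by Parseval it multiplies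
`‖·‖_F²` by `n3`. Hence the objective is the sum over `k` of the matrix objectives
`‖Ȳ⁽ᵏ⁾‖_* + 1/(2τ) ‖Ā⁽ᵏ⁾ - Ȳ⁽ᵏ⁾‖_F²` with `τ = n3/β`, and it suffices to show that singular
value soft thresholding solves each of them.

For `B = U S Vᴴ` and `Y = U D Vᴴ` with `D = max(S - τ, 0)`, the matrix `G = U min(S, τ)/τ Vᴴ`
is a subgradient of the nuclear norm at `Y`: `B - Y = τ G`, `G` is a contraction, and
`Re tr(Gᴴ Y) = ‖Y‖_*`. Expanding `‖B - M‖_F²` around `Y` and using `Re tr(Gᴴ M) ≤ ‖M‖_*`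
(Cauchy–Schwarz column by column in an eigenbasis of `Mᴴ M`) gives optimality of `Y`.
-/

theorem dft_eq_zmod_dft {n : ℕ} [NeZero n] (x : ZMod n → ℂ) : dft x = ZMod.dft x := by
  ext k
  refine Finset.sum_congr rfl fun t _ => ?_
  have : -(t * k) = (((-((k * t).val : ℤ)) : ℤ) : ZMod n) := by
    push_cast; rw [ZMod.natCast_zmod_val, mul_comm]
  rw [smul_eq_mul, mul_comm, this, ZMod.stdAddChar_coe, ← Complex.exp_nat_mul]
  congr 2
  push_cast
  ring

theorem dft_cconv {n : ℕ} [NeZero n] (a b : ZMod n → ℂ) (k : ZMod n) :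
    dft (cconv a b) k = dft a k * dft b k := by
  simp only [dft_eq_zmod_dft, ZMod.dft_apply, smul_eq_mul, cconv]
  rw [Finset.sum_mul_sum]
  simp only [Finset.mul_sum]
  rw [Finset.sum_comm]
  refine Finset.sum_congr rfl fun s _ => ?_
  rw [← Equiv.sum_comp (Equiv.addLeft s)]
  refine Finset.sum_congr rfl fun u _ => ?_
  simp only [Equiv.coe_addLeft, add_sub_cancel_left, add_mul, neg_add, AddChar.map_add_eq_mul]
  ring

theorem dft_conj_neg {n : ℕ} [NeZero n] (x : ZMod n → ℂ) (k : ZMod n) :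
    dft (fun t => conj (x (-t))) k = conj (dft x k) := by
  simp only [dft_eq_zmod_dft, ZMod.dft_apply, smul_eq_mul, map_sum, map_mul]
  rw [← Equiv.sum_comp (Equiv.neg (ZMod n))]
  refine Finset.sum_congr rfl fun t _ => ?_
  simp only [Equiv.neg_apply, neg_neg, neg_mul, ← AddChar.map_neg_eq_conj]

/-- Parseval: the convolution of `x` with its conjugate reflection has transform `|x̂|²`, and
Fourier inversion at `0` reads off its value there, `∑ t, |x t|²`. -/
theorem sum_norm_dft_sq {n : ℕ} [NeZero n] (x : ZMod n → ℂ) :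
    ∑ k, ‖dft x k‖ ^ 2 = n * ∑ t, ‖x t‖ ^ 2 := by
  set y : ZMod n → ℂ := fun t => conj (x (-t))
  have hdft : ∀ k, dft (cconv y x) k = (‖dft x k‖ ^ 2 : ℝ) := fun k => by
    rw [dft_cconv, dft_conj_neg, Complex.conj_mul']; push_cast; rfl
  have hconv : cconv y x 0 = (∑ t, ‖x t‖ ^ 2 : ℝ) := by
    simp only [cconv, y, zero_sub]
    rw [← Equiv.sum_comp (Equiv.neg (ZMod n))]
    push_cast
    simp only [Equiv.neg_apply, neg_neg, Complex.conj_mul']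
  have hinv := congrFun (ZMod.dft_dft (cconv y x)) 0
  rw [ZMod.dft_apply_zero, neg_zero, hconv, ← dft_eq_zmod_dft] at hinv
  simp only [hdft, smul_eq_mul] at hinv
  exact_mod_cast hinv

section FourierSlices

variable {n1 n2 n3 : ℕ} [NeZero n3]

theorem fslice_mdft_tProd {n4 : ℕ} (A : Tensor n1 n2 n3) (B : Tensor n2 n4 n3) (k : ZMod n3) :
    fslice (mdft (tProd A B)) k = fslice (mdft A) k * fslice (mdft B) k := by
  ext i j
  simp only [fslice, mdft, tProd, Matrix.of_apply, Matrix.mul_apply, ← dft_cconv]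
  simp only [dft_eq_zmod_dft, map_sum, Finset.sum_apply]

theorem fslice_mdft_tconj (X : Tensor n1 n2 n3) (k : ZMod n3) :
    fslice (mdft (tconj X)) k = (fslice (mdft X) k)ᴴ := by
  ext i j
  exact dft_conj_neg (X j i) k

theorem fslice_mdft_tId (n : ℕ) (k : ZMod n3) : fslice (mdft (tId n n3)) k = 1 := by
  ext i j
  simp only [fslice, mdft, tId, Matrix.of_apply, Matrix.one_apply, dft_eq_zmod_dft,
    ZMod.dft_apply]
  by_cases hij : i = j <;> simp [hij]

theorem fslice_mdft_sub (X Y : Tensor n1 n2 n3) (k : ZMod n3) :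
    fslice (mdft (X - Y)) k = fslice (mdft X) k - fslice (mdft Y) k := by
  ext i j
  simp only [fslice, mdft, Matrix.of_apply, Matrix.sub_apply, Pi.sub_apply, dft_eq_zmod_dft,
    map_sub]

theorem TOrthogonal.conjTranspose_mul_self {n : ℕ} {Q : Tensor n n n3} (hQ : TOrthogonal Q)
    (k : ZMod n3) : (fslice (mdft Q) k)ᴴ * fslice (mdft Q) k = 1 := by
  simpa only [fslice_mdft_tProd, fslice_mdft_tconj, fslice_mdft_tId] using
    congrArg (fun X : Tensor n n n3 => fslice (mdft X) k) hQ.2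

end FourierSlices

open scoped ComplexOrder MatrixOrder InnerProductSpace

section MatrixNorms

open WithLp

variable {m n : ℕ}

theorem frobM_sq (M : Matrix (Fin m) (Fin n) ℂ) : frobM M ^ 2 = ∑ i, ∑ j, ‖M i j‖ ^ 2 :=
  Real.sq_sqrt (by positivity)

theorem frobM_sq_eq_re_trace (M : Matrix (Fin m) (Fin n) ℂ) :
    frobM M ^ 2 = (trace (Mᴴ * M)).re := by
  rw [frobM_sq, Finset.sum_comm]
  simp only [trace, diag, mul_apply, conjTranspose_apply, RCLike.star_def, Complex.conj_mul',
    Complex.re_sum]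
  norm_cast

theorem frobM_add_sq (P Q : Matrix (Fin m) (Fin n) ℂ) :
    frobM (P + Q) ^ 2 = frobM P ^ 2 + frobM Q ^ 2 + 2 * (trace (Pᴴ * Q)).re := by
  have hQP : trace (Qᴴ * P) = star (trace (Pᴴ * Q)) := by
    rw [← trace_conjTranspose, conjTranspose_mul, conjTranspose_conjTranspose]
  simp only [frobM_sq_eq_re_trace, conjTranspose_add, Matrix.add_mul, Matrix.mul_add, trace_add,
    Complex.add_re, hQP, RCLike.star_def, Complex.conj_re]
  ring

theorem conjTranspose_mul_apply_eq_inner {ι κ : Type*} [Fintype ι] (P Q : Matrix ι κ ℂ)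
    (j j' : κ) : (Pᴴ * Q) j j' = ⟪toLp 2 (Pᵀ j), toLp 2 (Qᵀ j')⟫_ℂ := by
  simp [mul_apply, EuclideanSpace.inner_toLp_toLp, dotProduct, mul_comm]

theorem re_conjTranspose_mul_self_apply {ι κ : Type*} [Fintype ι] (P : Matrix ι κ ℂ) (j : κ) :
    ((Pᴴ * P) j j).re = ‖toLp 2 (Pᵀ j)‖ ^ 2 := by
  rw [conjTranspose_mul_apply_eq_inner, ← inner_self_eq_norm_sq (𝕜 := ℂ)]
  rfl

theorem re_trace_conjTranspose_mul_le {ι κ : Type*} [Fintype ι] [Fintype κ]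
    (P Q : Matrix ι κ ℂ) :
    (trace (Pᴴ * Q)).re ≤ ∑ j, ‖toLp 2 (Pᵀ j)‖ * ‖toLp 2 (Qᵀ j)‖ := by
  rw [trace, Complex.re_sum]
  exact Finset.sum_le_sum fun j _ => by
    rw [diag_apply, conjTranspose_mul_apply_eq_inner]
    exact re_inner_le_norm (𝕜 := ℂ) _ _

theorem norm_col_le_one_of_posSemidef {ι κ : Type*} [Fintype ι] [DecidableEq κ]
    {G : Matrix ι κ ℂ} (hG : (1 - Gᴴ * G).PosSemidef) (j : κ) : ‖toLp 2 (Gᵀ j)‖ ≤ 1 := by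
  have hj := (Complex.nonneg_iff.mp (hG.diag_nonneg (i := j))).1
  rw [Matrix.sub_apply, one_apply_eq, Complex.sub_re, Complex.one_re,
    re_conjTranspose_mul_self_apply, sub_nonneg] at hj
  exact (sq_le_one_iff₀ (norm_nonneg _)).mp hj

theorem re_trace_le_nuclearNorm {G : Matrix (Fin m) (Fin n) ℂ} (hG : (1 - Gᴴ * G).PosSemidef)
    (M : Matrix (Fin m) (Fin n) ℂ) : (trace (Gᴴ * M)).re ≤ nuclearNorm M := by
  set hH := isHermitian_conjTranspose_mul_self M
  set W : Matrix (Fin n) (Fin n) ℂ := (hH.eigenvectorUnitary : Matrix (Fin n) (Fin n) ℂ)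
  have hWW : Wᴴ * W = 1 := Unitary.coe_star_mul_self hH.eigenvectorUnitary
  have hWW' : W * Wᴴ = 1 := Unitary.coe_mul_star_self hH.eigenvectorUnitary
  have htrace : trace ((G * W)ᴴ * (M * W)) = trace (Gᴴ * M) := by
    rw [conjTranspose_mul, show Wᴴ * Gᴴ * (M * W) = Wᴴ * (Gᴴ * M) * W by
      simp only [Matrix.mul_assoc], trace_mul_cycle, hWW', Matrix.one_mul]
  have hGW : (1 - (G * W)ᴴ * (G * W)).PosSemidef := by
    convert hG.conjTranspose_mul_mul_same W using 1
    simp only [conjTranspose_mul, Matrix.mul_sub, Matrix.sub_mul, Matrix.mul_one, hWW,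
      Matrix.mul_assoc]
  have hMW : ∀ j, ‖toLp 2 ((M * W)ᵀ j)‖ = √(hH.eigenvalues j) := fun j => by
    have hdiag : (M * W)ᴴ * (M * W) = diagonal (RCLike.ofReal ∘ hH.eigenvalues) := by
      rw [← hH.conjStarAlgAut_star_eigenvectorUnitary, Unitary.conjStarAlgAut_star_apply]
      simp only [conjTranspose_mul, Matrix.mul_assoc, W, star_eq_conjTranspose]
    rw [← Real.sqrt_sq (norm_nonneg _), ← re_conjTranspose_mul_self_apply, hdiag,
      diagonal_apply_eq]
    rfl
  calc (trace (Gᴴ * M)).re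
      ≤ ∑ j, ‖toLp 2 ((G * W)ᵀ j)‖ * ‖toLp 2 ((M * W)ᵀ j)‖ := by
        rw [← htrace]; exact re_trace_conjTranspose_mul_le _ _
    _ ≤ ∑ j, ‖toLp 2 ((M * W)ᵀ j)‖ := Finset.sum_le_sum fun j _ =>
        mul_le_of_le_one_left (norm_nonneg _) (norm_col_le_one_of_posSemidef hGW j)
    _ = nuclearNorm M := by simp only [hMW, nuclearNorm]

theorem ofReal_nuclearNorm (M : Matrix (Fin m) (Fin n) ℂ) :
    (nuclearNorm M : ℂ) = trace (CFC.sqrt (Mᴴ * M)) := by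
  have hA := posSemidef_conjTranspose_mul_self M
  rw [CFC.sqrt_eq_cfc, cfc_nnreal_eq_real _ (Mᴴ * M) hA.nonneg, hA.1.cfc_eq,
    IsHermitian.cfc, Unitary.conjStarAlgAut_apply, trace_mul_cycle,
    Unitary.coe_star_mul_self, Matrix.one_mul, trace_diagonal, nuclearNorm, Complex.ofReal_sum]
  refine Finset.sum_congr rfl fun j _ => ?_
  simp [Real.coe_sqrt, Real.coe_toNNReal', max_eq_left (hA.eigenvalues_nonneg j)]

theorem nuclearNorm_eq_re_trace_of_mul_self {M : Matrix (Fin m) (Fin n) ℂ}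
    {P : Matrix (Fin n) (Fin n) ℂ} (hP : P.PosSemidef) (hMP : Mᴴ * M = P * P) :
    nuclearNorm M = (trace P).re := by
  rw [← CFC.sqrt_unique hMP.symm hP.nonneg, ← ofReal_nuclearNorm, Complex.ofReal_re]

theorem nuclearNorm_add_frobM_sq_le_of_subgradient {τ : ℝ} (hτ : 0 < τ)
    {B Y G : Matrix (Fin m) (Fin n) ℂ} (hBY : B - Y = (τ : ℂ) • G)
    (hG : (1 - Gᴴ * G).PosSemidef) (hGY : (trace (Gᴴ * Y)).re = nuclearNorm Y)
    (M : Matrix (Fin m) (Fin n) ℂ) :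
    nuclearNorm Y + 1 / (2 * τ) * frobM (B - Y) ^ 2
      ≤ nuclearNorm M + 1 / (2 * τ) * frobM (B - M) ^ 2 := by
  have hsplit : frobM (B - M) ^ 2 = frobM (B - Y) ^ 2 + frobM (Y - M) ^ 2
      + 2 * τ * ((trace (Gᴴ * Y)).re - (trace (Gᴴ * M)).re) := by
    rw [← sub_add_sub_cancel B Y M, frobM_add_sq, hBY, conjTranspose_smul, Matrix.smul_mul,
      trace_smul, Matrix.mul_sub, trace_sub, Complex.star_def, Complex.conj_ofReal,
      smul_eq_mul, Complex.re_ofReal_mul, Complex.sub_re]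
    ring
  have hscale : 1 / (2 * τ) * (2 * τ) = 1 := by field_simp
  have hdual := re_trace_le_nuclearNorm hG M
  have hYM : 0 ≤ 1 / (2 * τ) * frobM (Y - M) ^ 2 := by positivity
  rw [hsplit, mul_add, mul_add, ← mul_assoc, hscale, one_mul]
  linarith

end MatrixNorms

section SoftThreshold

variable {m n : ℕ}

def RectDiagonal {α : Type*} [Zero α] (X : Matrix (Fin m) (Fin n) α) : Prop :=
  ∀ (i : Fin m) (j : Fin n), (i : ℕ) ≠ j → X i j = 0

def softThreshold (τ : ℝ) (S : Matrix (Fin m) (Fin n) ℂ) : Matrix (Fin m) (Fin n) ℂ :=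
  S.map fun z => ((max (z.re - τ) 0 : ℝ) : ℂ)

namespace RectDiagonal

theorem map {α β : Type*} [Zero α] [Zero β] {X : Matrix (Fin m) (Fin n) α}
    (hX : RectDiagonal X) {f : α → β} (hf : f 0 = 0) : RectDiagonal (X.map f) :=
  fun i j hij => by rw [map_apply, hX i j hij, hf]

theorem sum_map_col {α β : Type*} [AddCommMonoid α] [AddCommMonoid β]
    {X : Matrix (Fin m) (Fin n) α} (hX : RectDiagonal X) {f : α → β} (hf : f 0 = 0)
    (j : Fin n) : ∑ i, f (X i j) = f (∑ i, X i j) := by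
  by_cases hj : (j : ℕ) < m
  · have hoff : ∀ i : Fin m, i ≠ ⟨j, hj⟩ → X i j = 0 := fun i hi =>
      hX i j fun h => hi (Fin.ext h)
    rw [Fintype.sum_eq_single _ fun i hi => by rw [hoff i hi, hf],
      Fintype.sum_eq_single _ hoff]
  · have hzero : ∀ i : Fin m, X i j = 0 := fun i => hX i j fun h => hj (h ▸ i.isLt)
    simp only [hzero, hf, Finset.sum_const_zero]

theorem conjTranspose_mul {α : Type*} [NonUnitalNonAssocSemiring α] [StarRing α]
    {X Y : Matrix (Fin m) (Fin n) α} (hX : RectDiagonal X) (hY : RectDiagonal Y) :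
    Xᴴ * Y = diagonal fun j => ∑ i, star (X i j) * Y i j := by
  ext j j'
  rcases eq_or_ne j j' with rfl | hjj'
  · simp [mul_apply]
  · rw [diagonal_apply_ne _ hjj', mul_apply]
    refine Finset.sum_eq_zero fun i _ => ?_
    by_cases hij : (i : ℕ) = j
    · rw [hY i j' fun h => hjj' (Fin.ext (hij.symm.trans h)), mul_zero]
    · rw [conjTranspose_apply, hX i j hij, star_zero, zero_mul]

theorem conjTranspose_map_ofReal_mul_map_ofReal {S : Matrix (Fin m) (Fin n) ℂ}
    (hS : RectDiagonal S) {f g : ℝ → ℝ} (hf : f 0 = 0) (hg : g 0 = 0) :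
    (S.map fun z => (f z.re : ℂ))ᴴ * S.map (fun z => (g z.re : ℂ))
      = diagonal fun j => ((f (∑ i, S i j).re * g (∑ i, S i j).re : ℝ) : ℂ) := by
  rw [(hS.map (by simp [hf])).conjTranspose_mul (hS.map (by simp [hg]))]
  refine congrArg diagonal (funext fun j => ?_)
  simp only [map_apply, Complex.star_def, Complex.conj_ofReal, ← Complex.ofReal_mul]
  exact hS.sum_map_col (f := fun z => ((f z.re * g z.re : ℝ) : ℂ)) (by simp [hf]) j

end RectDiagonal

theorem posSemidef_conj_diagonal_ofReal {V : Matrix (Fin n) (Fin n) ℂ} {d : Fin n → ℝ}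
    (hd : ∀ j, 0 ≤ d j) : (V * diagonal (fun j => (d j : ℂ)) * Vᴴ).PosSemidef :=
  PosSemidef.mul_mul_conjTranspose_same
    (posSemidef_diagonal_iff.mpr fun j => Complex.zero_le_real.mpr (hd j)) V

theorem conjTranspose_mul_conj_of_isometry {ι ι' κ κ' : Type*} [Fintype ι] [Fintype ι']
    [Fintype κ] [DecidableEq ι] {U : Matrix ι' ι ℂ} (hU : Uᴴ * U = 1) (V : Matrix κ' κ ℂ)
    (X Z : Matrix ι κ ℂ) : (U * X * Vᴴ)ᴴ * (U * Z * Vᴴ) = V * (Xᴴ * Z) * Vᴴ := by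
  simp only [conjTranspose_mul, conjTranspose_conjTranspose, Matrix.mul_assoc]
  rw [← Matrix.mul_assoc Uᴴ U, hU, Matrix.one_mul]

theorem sub_max_sub_zero (s τ : ℝ) : s - max (s - τ) 0 = min s τ := by
  rcases le_total s τ with h | h
  · rw [max_eq_right (by linarith), min_eq_left h, sub_zero]
  · rw [max_eq_left (by linarith), min_eq_right h]; ring

theorem min_div_mul_max_sub_zero {τ : ℝ} (hτ : τ ≠ 0) (s : ℝ) :
    min s τ / τ * max (s - τ) 0 = max (s - τ) 0 := by
  rcases le_total s τ with h | h
  · rw [max_eq_right (by linarith), mul_zero]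
  · rw [min_eq_right h, div_self hτ, one_mul]

theorem sub_softThreshold {τ : ℝ} (hτ : τ ≠ 0) {S : Matrix (Fin m) (Fin n) ℂ}
    (hS0 : ∀ i j, 0 ≤ S i j) :
    S - softThreshold τ S = (τ : ℂ) • S.map fun z => ((min z.re τ / τ : ℝ) : ℂ) := by
  ext i j
  have hreal : S i j = ((S i j).re : ℂ) :=
    Complex.ext rfl (by simp [(Complex.nonneg_iff.mp (hS0 i j)).2])
  simp only [softThreshold, Matrix.sub_apply, Matrix.smul_apply, map_apply, smul_eq_mul]
  rw [hreal, Complex.ofReal_re, ← Complex.ofReal_sub, sub_max_sub_zero, ← Complex.ofReal_mul,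
    mul_div_cancel₀ _ hτ]

theorem nuclearNorm_add_frobM_sq_softThreshold_le {τ : ℝ} (hτ : 0 < τ)
    {U : Matrix (Fin m) (Fin m) ℂ} {V : Matrix (Fin n) (Fin n) ℂ} (hU : Uᴴ * U = 1)
    (hV : Vᴴ * V = 1) {S : Matrix (Fin m) (Fin n) ℂ} (hS : RectDiagonal S)
    (hS0 : ∀ i j, 0 ≤ S i j) (M : Matrix (Fin m) (Fin n) ℂ) :
    nuclearNorm (U * softThreshold τ S * Vᴴ)
        + 1 / (2 * τ) * frobM (U * S * Vᴴ - U * softThreshold τ S * Vᴴ) ^ 2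
      ≤ nuclearNorm M + 1 / (2 * τ) * frobM (U * S * Vᴴ - M) ^ 2 := by
  set σ : Fin n → ℝ := fun j => (∑ i, S i j).re
  set D := softThreshold τ S
  set E := S.map fun z => ((min z.re τ / τ : ℝ) : ℂ)
  set d : Fin n → ℝ := fun j => max (σ j - τ) 0
  set e : Fin n → ℝ := fun j => min (σ j) τ / τ
  have hσ : ∀ j, 0 ≤ σ j := fun j => by
    simp only [σ, Complex.re_sum]
    exact Finset.sum_nonneg fun i _ => (Complex.nonneg_iff.mp (hS0 i j)).1
  have he : ∀ j, 0 ≤ e j ∧ e j ≤ 1 := fun j =>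
    ⟨div_nonneg (le_min (hσ j) hτ.le) hτ.le, div_le_one_of_le₀ (min_le_right _ _) hτ.le⟩
  have hd : ∀ j, 0 ≤ d j := fun j => le_max_right _ _
  have hDD : Dᴴ * D = diagonal fun j => ((d j * d j : ℝ) : ℂ) :=
    hS.conjTranspose_map_ofReal_mul_map_ofReal (f := fun s => max (s - τ) 0)
      (g := fun s => max (s - τ) 0) (by simp [hτ.le]) (by simp [hτ.le])
  have hED : Eᴴ * D = diagonal fun j => ((d j : ℝ) : ℂ) := by
    refine (hS.conjTranspose_map_ofReal_mul_map_ofReal (f := fun s => min s τ / τ)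
      (g := fun s => max (s - τ) 0) (by simp [hτ.le]) (by simp [hτ.le])).trans ?_
    simp only [min_div_mul_max_sub_zero hτ.ne']
    rfl
  have hEE : Eᴴ * E = diagonal fun j => ((e j * e j : ℝ) : ℂ) :=
    hS.conjTranspose_map_ofReal_mul_map_ofReal (f := fun s => min s τ / τ)
      (g := fun s => min s τ / τ) (by simp [hτ.le]) (by simp [hτ.le])
  have hP := posSemidef_conj_diagonal_ofReal (V := V) hd
  refine nuclearNorm_add_frobM_sq_le_of_subgradient hτ (G := U * E * Vᴴ) ?_ ?_ ?_ M
  · rw [← Matrix.sub_mul, ← Matrix.mul_sub, sub_softThreshold hτ.ne' hS0, Matrix.mul_smul,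
      Matrix.smul_mul]
  · have hI : (1 : Matrix (Fin n) (Fin n) ℂ) = V * diagonal (fun _ => ((1 : ℝ) : ℂ)) * Vᴴ := by
      simp [mul_eq_one_comm.mp hV]
    rw [conjTranspose_mul_conj_of_isometry hU, hEE, hI, ← Matrix.sub_mul, ← Matrix.mul_sub,
      diagonal_sub]
    simp_rw [← Complex.ofReal_sub]
    exact posSemidef_conj_diagonal_ofReal fun j => by nlinarith [he j]
  · have hYY : (U * D * Vᴴ)ᴴ * (U * D * Vᴴ)
        = V * diagonal (fun j => (d j : ℂ)) * Vᴴ * (V * diagonal (fun j => (d j : ℂ)) * Vᴴ) := by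
      nth_rw 1 [← hP.1.eq]
      rw [conjTranspose_mul_conj_of_isometry hU, conjTranspose_mul_conj_of_isometry hV, hDD,
        diagonal_conjTranspose, diagonal_mul_diagonal]
      simp
    rw [conjTranspose_mul_conj_of_isometry hU, hED, nuclearNorm_eq_re_trace_of_mul_self hP hYY]

end SoftThreshold

section TensorSlices

variable {n1 n2 n3 : ℕ} [NeZero n3]

theorem FDiagonal.rectDiagonal_fslice_mdft {S : Tensor n1 n2 n3} (hS : FDiagonal S)
    (k : ZMod n3) : RectDiagonal (fslice (mdft S) k) := fun i j hij => by
  change dft (S i j) k = 0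
  rw [show S i j = 0 from funext (hS i j · hij), dft_eq_zmod_dft, map_zero, Pi.zero_apply]

theorem fslice_mdft_eq_softThreshold {S D : Tensor n1 n2 n3} (hS : FDiagonal S) {τ : ℝ}
    (hτ : 0 ≤ τ) (hD : ∀ (i : Fin n1) (j : Fin n2) (k : ZMod n3), mdft D i j k =
      if (i : ℕ) = (j : ℕ) then ((max ((mdft S i j k).re - τ) 0 : ℝ) : ℂ) else 0)
    (k : ZMod n3) : fslice (mdft D) k = softThreshold τ (fslice (mdft S) k) := by
  ext i j
  simp only [fslice, softThreshold, Matrix.of_apply, Matrix.map_apply, hD]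
  split_ifs with hij
  · rfl
  · have h0 := hS.rectDiagonal_fslice_mdft k i j hij
    simp only [fslice, Matrix.of_apply] at h0
    simp [h0, hτ]

theorem sum_frobM_fslice_mdft_sq (X : Tensor n1 n2 n3) :
    ∑ k, frobM (fslice (mdft X) k) ^ 2 = n3 * frob X ^ 2 := by
  calc ∑ k, frobM (fslice (mdft X) k) ^ 2 = ∑ i, ∑ j, ∑ k, ‖dft (X i j) k‖ ^ 2 := by
        simp only [frobM_sq]
        rw [Finset.sum_comm]
        exact Finset.sum_congr rfl fun i _ => Finset.sum_comm
    _ = n3 * frob X ^ 2 := by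
        rw [frob, Real.sq_sqrt (by positivity)]
        simp only [sum_norm_dft_sq, Finset.mul_sum]

theorem tnn_add_frob_sq_eq_sum (β : ℝ) (A Y : Tensor n1 n2 n3) :
    tnn Y + β / 2 * frob (A - Y) ^ 2 = ∑ k, (nuclearNorm (fslice (mdft Y) k)
      + 1 / (2 * (n3 / β)) * frobM (fslice (mdft A) k - fslice (mdft Y) k) ^ 2) := by
  have hn3 : (n3 : ℝ) ≠ 0 := Nat.cast_ne_zero.mpr (NeZero.ne n3)
  rw [tnn, Finset.sum_add_distrib, ← Finset.mul_sum]
  simp_rw [← fslice_mdft_sub]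
  rw [sum_frobM_fslice_mdft_sq]
  field_simp

end TensorSlices

/-- closed-form solution of the Y-subproblem: given a t-SVD
`A = U ∗ S ∗ Vᴴ` and `β > 0`, the tensor `Y* = U ∗ D ∗ Vᴴ`, where `D` is the f-diagonal
tensor with Fourier-domain entries `D̄(i,i,k) = max (S̄(i,i,k) − n3/β) 0`, globally
minimizes `Y ↦ ‖Y‖_TNN + (β/2)‖A − Y‖_F²`. -/
theorem svt_tensor_minimizer {n1 n2 n3 : ℕ} [NeZero n3]
    (A : Tensor n1 n2 n3) (U : Tensor n1 n1 n3) (S : Tensor n1 n2 n3) (V : Tensor n2 n2 n3)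
    (hU : TOrthogonal U) (hV : TOrthogonal V) (hS : FDiagonal S)
    (hSnn : ∀ (i : Fin n1) (j : Fin n2) (k : ZMod n3), (i : ℕ) = (j : ℕ) →
      0 ≤ (mdft S i j k).re ∧ (mdft S i j k).im = 0)
    (hA : A = tProd (tProd U S) (tconj V))
    (β : ℝ) (hβ : 0 < β)
    (D : Tensor n1 n2 n3)
    (hD : ∀ (i : Fin n1) (j : Fin n2) (k : ZMod n3),
      mdft D i j k =
        if (i : ℕ) = (j : ℕ) then ((max ((mdft S i j k).re - n3 / β) 0 : ℝ) : ℂ) else 0) :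
    ∀ Y : Tensor n1 n2 n3,
      tnn (tProd (tProd U D) (tconj V))
          + β / 2 * frob (A - tProd (tProd U D) (tconj V)) ^ 2
        ≤ tnn Y + β / 2 * frob (A - Y) ^ 2 := by
  intro Y
  have hτ : 0 < (n3 : ℝ) / β := div_pos (Nat.cast_pos.mpr (NeZero.pos n3)) hβ
  rw [tnn_add_frob_sq_eq_sum, tnn_add_frob_sq_eq_sum]
  refine Finset.sum_le_sum fun k _ => ?_
  have hS0 : ∀ i j, 0 ≤ fslice (mdft S) k i j := fun i j => by
    by_cases hij : (i : ℕ) = j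
    · exact Complex.nonneg_iff.mpr ⟨(hSnn i j k hij).1, (hSnn i j k hij).2.symm⟩
    · exact (hS.rectDiagonal_fslice_mdft k i j hij).symm.le
  subst hA
  simp only [fslice_mdft_tProd, fslice_mdft_tconj, fslice_mdft_eq_softThreshold hS hτ.le hD k]
  exact nuclearNorm_add_frobM_sq_softThreshold_le hτ (hU.conjTranspose_mul_self k)
    (hV.conjTranspose_mul_self k) (hS.rectDiagonal_fslice_mdft k) hS0 _

end
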